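/- For every positive integer n, the length-4 spectral correlation set S₄(n) := {(λ₁, λ₂, λ₃, λ₄) ∈ Λ_n⁴ : λ₁ + λ₂ + λ₃ + λ₄ = 0} satisfies |S₄(n)| = 3·N_n·(N_n − 1). Equivalently, every 4-tuple of lattice points of Λ_n summing to zero consists of two antipodal pairs. -/

import Mathlib

noncomputable section

/-- The set `Λ_n` of lattice points on the circle of radius `√n`. -/
def Lam (n : ℕ) : Finset (ℤ × ℤ) :=
  (Finset.Icc (-(n : ℤ), -(n : ℤ)) ((n : ℤ), (n : ℤ))).filter
    fun l => l.1 ^ 2 + l.2 ^ 2 = (n : ℤ)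

/-- The spectral multiplicity `N_n = |Λ_n|`. -/
def Nn (n : ℕ) : ℕ := (Lam n).card

/-- The length-3 spectral correlation set
`S₃(n) = {(λ, λ', λ'') ∈ Λ_n³ : λ + λ' + λ'' = 0}`. -/
def S3 (n : ℕ) : Finset ((ℤ × ℤ) × (ℤ × ℤ) × (ℤ × ℤ)) :=
  ((Lam n) ×ˢ (Lam n) ×ˢ (Lam n)).filter fun t => t.1 + t.2.1 + t.2.2 = 0

/-- The length-4 spectral correlation set
`S₄(n) = {(λ₁, λ₂, λ₃, λ₄) ∈ Λ_n⁴ : λ₁ + λ₂ + λ₃ + λ₄ = 0}`. -/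
def S4 (n : ℕ) : Finset ((ℤ × ℤ) × (ℤ × ℤ) × (ℤ × ℤ) × (ℤ × ℤ)) :=
  ((Lam n) ×ˢ (Lam n) ×ˢ (Lam n) ×ˢ (Lam n)).filter
    fun t => t.1 + t.2.1 + t.2.2.1 + t.2.2.2 = 0

end

/-!
Identify `ℤ²` with the Gaussian integers, where `λ ∈ Λ_n` means `λ * conj λ = n`. If
`a + b + c + d = 0` with all four of norm `n`, conjugating `d = -(a + b + c)` and using
`conj a = n / a` turns `|d|² = n` into `(a + b + c)(ab + bc + ca) = abc`, i.e.
`(a + b)(a + c)(b + c) = 0`: the quadruple splits into two antipodal pairs in one of three ways.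
Each way is parametrised by `Λ_n²`, any two of them share the `N_n` quadruples `±λ, ±λ`, and
no quadruple lies in all three because `0 ∉ Λ_n`; inclusion–exclusion gives `3N_n² - 3N_n`.
-/

open Finset

theorem Finset.card_union_union_add_card_inter {α : Type*} [DecidableEq α] (A B C : Finset α) :
    #(A ∪ B ∪ C) + #(A ∩ B) + #(A ∩ C) + #(B ∩ C) = #A + #B + #C + #(A ∩ B ∩ C) := by
  have hABC := card_union_add_card_inter (A ∪ B) C
  have hAB := card_union_add_card_inter A B
  have hACBC := card_union_add_card_inter (A ∩ C) (B ∩ C)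
  rw [union_inter_distrib_right] at hABC
  rw [← inter_inter_distrib_right] at hACBC
  omega

section ZeroSumQuadruples

variable {G : Type*} [AddCommGroup G] [DecidableEq G]

def zeroSumQuads (s : Finset G) : Finset (G × G × G × G) :=
  (s ×ˢ s ×ˢ s ×ˢ s).filter fun t => t.1 + t.2.1 + t.2.2.1 + t.2.2.2 = 0

def antipodalQuads₁₂ (s : Finset G) : Finset (G × G × G × G) :=
  (s ×ˢ s).image fun p => (p.1, -p.1, p.2, -p.2)

def antipodalQuads₁₃ (s : Finset G) : Finset (G × G × G × G) :=
  (s ×ˢ s).image fun p => (p.1, p.2, -p.1, -p.2)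

def antipodalQuads₁₄ (s : Finset G) : Finset (G × G × G × G) :=
  (s ×ˢ s).image fun p => (p.1, p.2, -p.2, -p.1)

variable (s : Finset G)

theorem card_antipodalQuads₁₂ : #(antipodalQuads₁₂ s) = #s * #s := by
  rw [antipodalQuads₁₂, card_image_of_injective _ (fun p q h => by simp_all [Prod.ext_iff]),
    card_product]

theorem card_antipodalQuads₁₃ : #(antipodalQuads₁₃ s) = #s * #s := by
  rw [antipodalQuads₁₃, card_image_of_injective _ (fun p q h => by simp_all [Prod.ext_iff]),
    card_product]

theorem card_antipodalQuads₁₄ : #(antipodalQuads₁₄ s) = #s * #s := by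
  rw [antipodalQuads₁₄, card_image_of_injective _ (fun p q h => by simp_all [Prod.ext_iff]),
    card_product]

variable {s} {a b c d : G}

theorem mem_antipodalQuads₁₂ :
    (a, b, c, d) ∈ antipodalQuads₁₂ s ↔ a ∈ s ∧ c ∈ s ∧ b = -a ∧ d = -c := by
  simp [antipodalQuads₁₂, eq_comm, and_assoc]

theorem mem_antipodalQuads₁₃ :
    (a, b, c, d) ∈ antipodalQuads₁₃ s ↔ a ∈ s ∧ b ∈ s ∧ c = -a ∧ d = -b := by
  simp [antipodalQuads₁₃, eq_comm, and_assoc]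

theorem mem_antipodalQuads₁₄ :
    (a, b, c, d) ∈ antipodalQuads₁₄ s ↔ a ∈ s ∧ b ∈ s ∧ c = -b ∧ d = -a := by
  simp [antipodalQuads₁₄, eq_comm, and_assoc]

theorem card_antipodalQuads₁₂_inter_antipodalQuads₁₃ (hneg : ∀ x ∈ s, -x ∈ s) :
    #(antipodalQuads₁₂ s ∩ antipodalQuads₁₃ s) = #s := by
  suffices antipodalQuads₁₂ s ∩ antipodalQuads₁₃ s = s.image fun a => (a, -a, -a, a) by
    rw [this, card_image_of_injective _ fun _ _ h => congrArg Prod.fst h]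
  ext ⟨a, b, c, d⟩
  simp only [mem_inter, mem_antipodalQuads₁₂, mem_antipodalQuads₁₃, mem_image, Prod.mk.injEq]
  constructor
  · rintro ⟨⟨ha, -, rfl, rfl⟩, -, -, rfl, -⟩
    exact ⟨a, ha, rfl, rfl, rfl, (neg_neg a).symm⟩
  · rintro ⟨a, ha, rfl, rfl, rfl, rfl⟩
    simp [ha, hneg a ha]

theorem card_antipodalQuads₁₂_inter_antipodalQuads₁₄ (hneg : ∀ x ∈ s, -x ∈ s) :
    #(antipodalQuads₁₂ s ∩ antipodalQuads₁₄ s) = #s := by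
  suffices antipodalQuads₁₂ s ∩ antipodalQuads₁₄ s = s.image fun a => (a, -a, a, -a) by
    rw [this, card_image_of_injective _ fun _ _ h => congrArg Prod.fst h]
  ext ⟨a, b, c, d⟩
  simp only [mem_inter, mem_antipodalQuads₁₂, mem_antipodalQuads₁₄, mem_image, Prod.mk.injEq]
  constructor
  · rintro ⟨⟨ha, -, rfl, rfl⟩, -, -, h, -⟩
    exact ⟨a, ha, rfl, rfl, by simpa using h.symm, by simp [h]⟩
  · rintro ⟨a, ha, rfl, rfl, rfl, rfl⟩
    simp [ha, hneg a ha]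

theorem card_antipodalQuads₁₃_inter_antipodalQuads₁₄ :
    #(antipodalQuads₁₃ s ∩ antipodalQuads₁₄ s) = #s := by
  suffices antipodalQuads₁₃ s ∩ antipodalQuads₁₄ s = s.image fun a => (a, a, -a, -a) by
    rw [this, card_image_of_injective _ fun _ _ h => congrArg Prod.fst h]
  ext ⟨a, b, c, d⟩
  simp only [mem_inter, mem_antipodalQuads₁₃, mem_antipodalQuads₁₄, mem_image, Prod.mk.injEq]
  constructor
  · rintro ⟨⟨ha, -, rfl, rfl⟩, -, -, h, -⟩
    exact ⟨a, ha, rfl, neg_injective h, rfl, h⟩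
  · rintro ⟨a, ha, rfl, rfl, rfl, rfl⟩
    simp [ha]

theorem antipodalQuads_inter_eq_empty [IsAddTorsionFree G] (h0 : 0 ∉ s) :
    antipodalQuads₁₂ s ∩ antipodalQuads₁₃ s ∩ antipodalQuads₁₄ s = ∅ := by
  refine eq_empty_of_forall_notMem fun ⟨a, b, c, d⟩ h => ?_
  simp only [mem_inter, mem_antipodalQuads₁₂, mem_antipodalQuads₁₃, mem_antipodalQuads₁₄] at h
  obtain ⟨⟨⟨ha, -, rfl, rfl⟩, -, -, h13, -⟩, -, -, h14, -⟩ := h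
  rw [h13, neg_neg] at h14
  exact h0 (self_eq_neg.mp h14.symm ▸ ha)

theorem zeroSumQuads_eq_union (hneg : ∀ x ∈ s, -x ∈ s)
    (hpair : ∀ a ∈ s, ∀ b ∈ s, ∀ c ∈ s, ∀ d ∈ s,
      a + b + c + d = 0 → a + b = 0 ∨ a + c = 0 ∨ b + c = 0) :
    zeroSumQuads s = antipodalQuads₁₂ s ∪ antipodalQuads₁₃ s ∪ antipodalQuads₁₄ s := by
  ext ⟨a, b, c, d⟩
  simp only [zeroSumQuads, mem_filter, mem_product, mem_union, mem_antipodalQuads₁₂,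
    mem_antipodalQuads₁₃, mem_antipodalQuads₁₄]
  constructor
  · rintro ⟨⟨ha, hb, hc, hd⟩, h⟩
    rcases hpair a ha b hb c hc d hd h with hab | hac | hbc
    · exact .inl (.inl ⟨ha, hc, eq_neg_of_add_eq_zero_right hab, by grind⟩)
    · exact .inl (.inr ⟨ha, hb, eq_neg_of_add_eq_zero_right hac, by grind⟩)
    · exact .inr ⟨ha, hb, eq_neg_of_add_eq_zero_right hbc, by grind⟩
  · rintro ((⟨ha, hc, rfl, rfl⟩ | ⟨ha, hb, rfl, rfl⟩) | ⟨ha, hb, rfl, rfl⟩)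
    all_goals exact ⟨by simp [*], by abel⟩

theorem card_zeroSumQuads [IsAddTorsionFree G] (hneg : ∀ x ∈ s, -x ∈ s) (h0 : 0 ∉ s)
    (hpair : ∀ a ∈ s, ∀ b ∈ s, ∀ c ∈ s, ∀ d ∈ s,
      a + b + c + d = 0 → a + b = 0 ∨ a + c = 0 ∨ b + c = 0) :
    (#(zeroSumQuads s) : ℤ) = 3 * #s * (#s - 1) := by
  have h := card_union_union_add_card_inter (antipodalQuads₁₂ s) (antipodalQuads₁₃ s)
    (antipodalQuads₁₄ s)
  rw [← zeroSumQuads_eq_union hneg hpair, antipodalQuads_inter_eq_empty h0,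
    card_antipodalQuads₁₂_inter_antipodalQuads₁₃ hneg,
    card_antipodalQuads₁₂_inter_antipodalQuads₁₄ hneg, card_antipodalQuads₁₃_inter_antipodalQuads₁₄,
    card_antipodalQuads₁₂, card_antipodalQuads₁₃, card_antipodalQuads₁₄, card_empty] at h
  zify at h
  linear_combination h

end ZeroSumQuadruples

theorem add_eq_zero_or_of_mul_star_eq {R : Type*} [CommRing R] [IsDomain R] [StarRing R]
    {r a b c d : R} (hr : r ≠ 0) (ha : a * star a = r) (hb : b * star b = r)
    (hc : c * star c = r) (hd : d * star d = r) (h : a + b + c + d = 0) :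
    a + b = 0 ∨ a + c = 0 ∨ b + c = 0 := by
  obtain rfl : d = -(a + b + c) := by linear_combination h
  rw [star_neg, star_add, star_add] at hd
  have key : r * ((a + b) * (a + c) * (b + c)) = 0 := by
    linear_combination (a * b * c) * hd - (a + b + c) * (b * c * ha + a * c * hb + a * b * hc)
  simpa [hr, or_assoc] using key

def toGaussianInt : ℤ × ℤ →+ GaussianInt :=
  AddMonoidHom.mk' (fun p => ⟨p.1, p.2⟩) fun _ _ => rfl

theorem toGaussianInt_injective : Function.Injective toGaussianInt := by
  rintro ⟨x, y⟩ ⟨x', y'⟩ h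
  simpa [toGaussianInt, Zsqrtd.ext_iff] using h

theorem toGaussianInt_mul_star (p : ℤ × ℤ) :
    toGaussianInt p * star (toGaussianInt p) = ((p.1 ^ 2 + p.2 ^ 2 : ℤ) : GaussianInt) := by
  rw [← Zsqrtd.norm_eq_mul_conj, Zsqrtd.norm_def]
  simp [toGaussianInt]
  ring

theorem mem_Lam {n : ℕ} {l : ℤ × ℤ} : l ∈ Lam n ↔ l.1 ^ 2 + l.2 ^ 2 = n := by
  refine ⟨fun h => (mem_filter.mp h).2, fun h => mem_filter.mpr ⟨?_, h⟩⟩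
  have h₁ := Int.le_self_sq l.1
  have h₁' := Int.le_self_sq (-l.1)
  have h₂ := Int.le_self_sq l.2
  have h₂' := Int.le_self_sq (-l.2)
  rw [neg_sq] at h₁' h₂'
  simp only [mem_Icc, Prod.le_def]
  refine ⟨⟨?_, ?_⟩, ?_, ?_⟩ <;> nlinarith [sq_nonneg l.1, sq_nonneg l.2]

theorem neg_mem_Lam {n : ℕ} {l : ℤ × ℤ} (h : l ∈ Lam n) : -l ∈ Lam n := by
  rw [mem_Lam] at h ⊢
  simpa using h

theorem zero_notMem_Lam {n : ℕ} (hn : 0 < n) : (0 : ℤ × ℤ) ∉ Lam n := by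
  simp only [mem_Lam, Prod.fst_zero, Prod.snd_zero]
  lia

theorem toGaussianInt_mul_star_of_mem_Lam {n : ℕ} {l : ℤ × ℤ} (h : l ∈ Lam n) :
    toGaussianInt l * star (toGaussianInt l) = ((n : ℤ) : GaussianInt) := by
  rw [toGaussianInt_mul_star, mem_Lam.mp h]

theorem add_eq_zero_or_of_mem_Lam {n : ℕ} (hn : 0 < n) :
    ∀ a ∈ Lam n, ∀ b ∈ Lam n, ∀ c ∈ Lam n, ∀ d ∈ Lam n,
      a + b + c + d = 0 → a + b = 0 ∨ a + c = 0 ∨ b + c = 0 := by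
  intro a ha b hb c hc d hd h
  have hn' : ((n : ℤ) : GaussianInt) ≠ 0 := by exact_mod_cast hn.ne'
  have := add_eq_zero_or_of_mul_star_eq hn' (toGaussianInt_mul_star_of_mem_Lam ha)
    (toGaussianInt_mul_star_of_mem_Lam hb) (toGaussianInt_mul_star_of_mem_Lam hc)
    (toGaussianInt_mul_star_of_mem_Lam hd) (by simp only [← map_add, h, map_zero])
  simpa only [← map_add, map_eq_zero_iff _ toGaussianInt_injective] using this

/-- The length-4 spectral correlation set satisfies
`|S₄(n)| = 3N_n(N_n - 1)`. -/
theorem S4_card_eq (n : ℕ) (hn : 0 < n) :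
    ((S4 n).card : ℤ) = 3 * (Nn n : ℤ) * ((Nn n : ℤ) - 1) :=
  card_zeroSumQuads (fun _ => neg_mem_Lam) (zero_notMem_Lam hn) (add_eq_zero_or_of_mem_Lam hn)
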